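/- arXiv:2301.00685 — 5 statements merged into one kernel-verified Lean document; each statement's English description precedes it below -/
import Mathlib

section
/- Let g : ℝ → ℝ be an even, smooth, compactly supported function and define H_{L,τ}(x) = (2x/L)·∑_{k=1}^∞ g(kx/L)·cos(kxτ)/sinh(kx/2) for x > 0. There is a constant C > 0 (depending only on g) such that for all L > 2, all τ ≥ 0, and all 0 < x < 1/2, one has |H_{L,τ}(x)| ≤ C·(1/L)·log(L/x). -/
open Real Filter

/-- The function `H_{L,τ}(x) = (2x/L) ∑_{k≥1} g(kx/L) cos(kxτ)/sinh(kx/2)`. -/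
noncomputable def Hfun (g : ℝ → ℝ) (L τ x : ℝ) : ℝ :=
  (2 * x / L) * ∑' k : ℕ,
    g (((k : ℝ) + 1) * x / L) * Real.cos (((k : ℝ) + 1) * x * τ) /
      Real.sinh (((k : ℝ) + 1) * x / 2)

theorem Hfun_bound_small_x
    (g : ℝ → ℝ) (hg_even : ∀ x, g (-x) = g x)
    (hg_smooth : ContDiff ℝ (⊤ : ℕ∞) g) (hg_supp : HasCompactSupport g) :
    ∃ C : ℝ, 0 < C ∧ ∀ L : ℝ, 2 < L → ∀ τ : ℝ, 0 ≤ τ → ∀ x : ℝ, 0 < x → x < 1/2 →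
      |Hfun g L τ x| ≤ C * (1 / L) * Real.log (L / x) := by
  -- bound on |g|
  obtain ⟨M0, hM0⟩ := hg_supp.exists_bound_of_continuous hg_smooth.continuous
  set M : ℝ := max M0 1 with hMdef
  have hM1 : (1:ℝ) ≤ M := le_max_right _ _
  have hM : ∀ y, |g y| ≤ M := fun y => (hM0 y).trans (le_max_left _ _)
  -- support radius
  obtain ⟨A0, hA0⟩ := hg_supp.isBounded.subset_closedBall 0
  set A : ℝ := max A0 1 with hAdef
  have hA1 : (1:ℝ) ≤ A := le_max_right _ _
  have hgz : ∀ y : ℝ, A < |y| → g y = 0 := by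
    intro y hy
    apply image_eq_zero_of_notMem_tsupport
    intro hmem
    have := hA0 hmem
    simp only [Metric.mem_closedBall, Real.dist_eq, sub_zero] at this
    exact absurd (this.trans (le_max_left A0 1)) (not_le.mpr hy)
  have hlog2A : 0 < Real.log (2 * A) := Real.log_pos (by linarith)
  refine ⟨4 * M * (2 + Real.log (2 * A)), by positivity, ?_⟩
  intro L hL τ hτ x hx hx2
  have hxL : 0 < L := by linarith
  have hLx4 : 4 ≤ L / x := by
    rw [le_div_iff₀ hx]; nlinarith
  have hlogLx : 1 ≤ Real.log (L / x) := by
    rw [Real.le_log_iff_exp_le (by linarith)]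
    have := Real.exp_one_lt_d9
    linarith
  set N : ℕ := ⌈A * L / x⌉₊ with hNdef
  have hALx : 4 ≤ A * L / x := by
    calc (4:ℝ) ≤ L / x := hLx4
    _ = 1 * (L / x) := (one_mul _).symm
    _ ≤ A * (L / x) := by
        apply mul_le_mul_of_nonneg_right hA1 (by positivity)
    _ = A * L / x := by ring
  have hN1 : 1 ≤ N := by
    rw [hNdef, Nat.one_le_ceil_iff]; linarith
  set f : ℕ → ℝ := fun k =>
    g (((k : ℝ) + 1) * x / L) * Real.cos (((k : ℝ) + 1) * x * τ) /
      Real.sinh (((k : ℝ) + 1) * x / 2) with hfdef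
  have hvanish : ∀ k ∉ Finset.range N, f k = 0 := by
    intro k hk
    simp only [Finset.mem_range, not_lt] at hk
    have hkN : (A * L / x : ℝ) ≤ k := le_trans (Nat.ceil_le.mp le_rfl) (Nat.cast_le.mpr hk)
    have : A < ((k:ℝ) + 1) * x / L := by
      rw [lt_div_iff₀ hxL]
      have : A * L ≤ (k:ℝ) * x := by
        rw [div_le_iff₀ hx] at hkN; linarith
      nlinarith
    have hg0 : g (((k:ℝ) + 1) * x / L) = 0 := by
      apply hgz
      rwa [abs_of_pos (by positivity)]
    simp [hfdef, hg0]
  have htsum : ∑' k : ℕ, f k = ∑ k ∈ Finset.range N, f k := tsum_eq_sum hvanish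
  have hterm : ∀ k ∈ Finset.range N, |f k| ≤ 2 * M / (((k:ℝ) + 1) * x) := by
    intro k _
    have hkx : 0 < ((k:ℝ) + 1) * x := by positivity
    have hs : ((k:ℝ) + 1) * x / 2 ≤ Real.sinh (((k:ℝ) + 1) * x / 2) :=
      Real.self_le_sinh_iff.mpr (by positivity)
    have hspos : 0 < Real.sinh (((k:ℝ) + 1) * x / 2) := lt_of_lt_of_le (by positivity) hs
    rw [hfdef, abs_div, abs_mul, abs_of_pos hspos]
    calc |g (((k:ℝ) + 1) * x / L)| * |Real.cos (((k:ℝ) + 1) * x * τ)| /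
          Real.sinh (((k:ℝ) + 1) * x / 2)
        ≤ M * 1 / (((k:ℝ) + 1) * x / 2) := by
          apply div_le_div₀ (by positivity) ?_ (by positivity) hs
          exact mul_le_mul (hM _) (Real.abs_cos_le_one _) (abs_nonneg _) (by linarith)
      _ = 2 * M / (((k:ℝ) + 1) * x) := by
          rw [mul_one, div_div_eq_mul_div]; ring
  have hharm : ∑ k ∈ Finset.range N, (((k:ℝ) + 1))⁻¹ ≤ 1 + Real.log N := by
    have := harmonic_le_one_add_log N
    rw [harmonic] at this
    have hcast : ((∑ i ∈ Finset.range N, ((i:ℚ) + 1)⁻¹ : ℚ) : ℝ)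
        = ∑ k ∈ Finset.range N, (((k:ℝ) + 1))⁻¹ := by
      push_cast
      exact Finset.sum_congr rfl fun i _ => by rw [add_comm]
    push_cast at this
    linarith [this]
  have hNle : (N:ℝ) ≤ 2 * A * (L / x) := by
    have h1 : (N:ℝ) < A * L / x + 1 := Nat.ceil_lt_add_one (by positivity)
    have : A * L / x + 1 ≤ 2 * A * (L / x) := by
      have : A * L / x = A * (L/x) := by ring
      nlinarith [hALx, hA1, hLx4, mul_le_mul_of_nonneg_right hA1 (le_trans (by norm_num) hLx4)]
    linarith
  have hlogN : Real.log N ≤ Real.log (2 * A) + Real.log (L / x) := by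
    calc Real.log N ≤ Real.log (2 * A * (L / x)) := by
          apply Real.log_le_log (by exact_mod_cast Nat.cast_pos.mpr hN1) hNle
      _ = Real.log (2 * A) + Real.log (L / x) := by
          rw [Real.log_mul (by positivity) (by positivity)]
  -- main estimate
  have key : |Hfun g L τ x| ≤ (4 * M / L) * (1 + Real.log N) := by
    rw [Hfun, htsum]
    have h1 : |(2 * x / L) * ∑ k ∈ Finset.range N, f k|
        ≤ (2 * x / L) * ∑ k ∈ Finset.range N, |f k| := by
      rw [abs_mul, abs_of_pos (by positivity : (0:ℝ) < 2 * x / L)]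
      exact mul_le_mul_of_nonneg_left (Finset.abs_sum_le_sum_abs _ _) (by positivity)
    refine h1.trans ?_
    have h2 : ∑ k ∈ Finset.range N, |f k| ≤ ∑ k ∈ Finset.range N, 2 * M / (((k:ℝ) + 1) * x) :=
      Finset.sum_le_sum hterm
    have h3 : (2 * x / L) * ∑ k ∈ Finset.range N, 2 * M / (((k:ℝ) + 1) * x)
        = (4 * M / L) * ∑ k ∈ Finset.range N, (((k:ℝ) + 1))⁻¹ := by
      rw [Finset.mul_sum, Finset.mul_sum]
      apply Finset.sum_congr rfl
      intro k _
      field_simp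
      ring
    calc (2 * x / L) * ∑ k ∈ Finset.range N, |f k|
        ≤ (2 * x / L) * ∑ k ∈ Finset.range N, 2 * M / (((k:ℝ) + 1) * x) :=
          mul_le_mul_of_nonneg_left h2 (by positivity)
      _ = (4 * M / L) * ∑ k ∈ Finset.range N, (((k:ℝ) + 1))⁻¹ := h3
      _ ≤ (4 * M / L) * (1 + Real.log N) :=
          mul_le_mul_of_nonneg_left hharm (by positivity)
  refine key.trans ?_
  have hfinal : 1 + Real.log N ≤ (2 + Real.log (2 * A)) * Real.log (L / x) := by
    have : 1 + Real.log N ≤ 1 + Real.log (2 * A) + Real.log (L / x) := by linarith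
    refine this.trans ?_
    nlinarith [hlogLx, hlog2A]
  calc (4 * M / L) * (1 + Real.log N)
      ≤ (4 * M / L) * ((2 + Real.log (2 * A)) * Real.log (L / x)) :=
        mul_le_mul_of_nonneg_left hfinal (by positivity)
    _ = 4 * M * (2 + Real.log (2 * A)) * (1 / L) * Real.log (L / x) := by
        field_simp
end

section
/- Let g : ℝ → ℝ be an even, smooth, compactly supported function and define H_{L,τ}(x) = (2x/L)·∑_{k=1}^∞ g(kx/L)·cos(kxτ)/sinh(kx/2) for x > 0. There is a constant C > 0 (depending only on g) such that for all L > 2, all τ ≥ 0, and all x ≥ 1/2, one has |H_{L,τ}(x)| ≤ C·(1/L)·x·exp(−x/2). -/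
open Real Filter

lemma sinh_lower (t : ℝ) (ht : 1/4 ≤ t) :
    (1 - Real.exp (-(1/2))) / 2 * Real.exp t ≤ Real.sinh t := by
  rw [Real.sinh_eq]
  have h1 : Real.exp (-t) ≤ Real.exp (-(1/2)) * Real.exp t := by
    rw [← Real.exp_add]
    exact Real.exp_le_exp.mpr (by linarith)
  have := Real.exp_pos t
  nlinarith

theorem Hfun_bound_large_x
    (g : ℝ → ℝ) (hg_even : ∀ x, g (-x) = g x)
    (hg_smooth : ContDiff ℝ (⊤ : ℕ∞) g) (hg_supp : HasCompactSupport g) :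
    ∃ C : ℝ, 0 < C ∧ ∀ L : ℝ, 2 < L → ∀ τ : ℝ, 0 ≤ τ → ∀ x : ℝ, 1/2 ≤ x →
      |Hfun g L τ x| ≤ C * (1 / L) * x * Real.exp (-x / 2) := by
  obtain ⟨M, hM⟩ := hg_supp.exists_bound_of_continuous hg_smooth.continuous
  set c : ℝ := (1 - Real.exp (-(1/2))) / 2 with hc
  have hc0 : 0 < c := by
    have : Real.exp (-(1/2)) < 1 := Real.exp_lt_one_iff.mpr (by norm_num)
    simp only [hc]; linarith
  set A : ℝ := (M + 1) / c with hA
  have hM0 : 0 ≤ M := le_trans (norm_nonneg _) (hM 0)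
  have hA0 : 0 < A := div_pos (by linarith) hc0
  have hd : (0:ℝ) < 1 - Real.exp (-(1/4)) := by
    have : Real.exp (-(1/4)) < 1 := Real.exp_lt_one_iff.mpr (by norm_num)
    linarith
  refine ⟨2 * A / (1 - Real.exp (-(1/4))), by positivity, ?_⟩
  intro L hL τ hτ x hx
  have hL0 : (0:ℝ) < L := by linarith
  have hx0 : (0:ℝ) < x := by linarith
  set r : ℝ := Real.exp (-x / 2) with hr
  have hr0 : 0 < r := Real.exp_pos _
  have hr1 : r < 1 := Real.exp_lt_one_iff.mpr (by linarith)
  -- bound each term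
  have hterm : ∀ k : ℕ,
      ‖g (((k : ℝ) + 1) * x / L) * Real.cos (((k : ℝ) + 1) * x * τ) /
        Real.sinh (((k : ℝ) + 1) * x / 2)‖ ≤ A * r * r ^ k := by
    intro k
    have hk1 : (1:ℝ) ≤ (k : ℝ) + 1 := by
      have := Nat.cast_nonneg (α := ℝ) k; linarith
    have ht : (1/4 : ℝ) ≤ ((k : ℝ) + 1) * x / 2 := by
      have : (1:ℝ) * (1/2) ≤ ((k : ℝ) + 1) * x :=
        mul_le_mul hk1 hx (by norm_num) (by positivity)
      linarith
    have hsinh := sinh_lower _ ht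
    have hsinh0 : 0 < Real.sinh (((k : ℝ) + 1) * x / 2) :=
      lt_of_lt_of_le (by positivity) hsinh
    have hnum : |g (((k : ℝ) + 1) * x / L) * Real.cos (((k : ℝ) + 1) * x * τ)| ≤ M + 1 := by
      rw [abs_mul]
      calc |g (((k : ℝ) + 1) * x / L)| * |Real.cos (((k : ℝ) + 1) * x * τ)|
          ≤ M * 1 := mul_le_mul (hM _) (Real.abs_cos_le_one _) (abs_nonneg _) hM0
        _ ≤ M + 1 := by linarith
    rw [Real.norm_eq_abs, abs_div, abs_of_pos hsinh0]
    have hiv : (Real.sinh (((k : ℝ) + 1) * x / 2))⁻¹ ≤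
        (c * Real.exp (((k : ℝ) + 1) * x / 2))⁻¹ :=
      inv_anti₀ (by positivity) hsinh
    have hexp : r * r ^ k = Real.exp (-(((k : ℝ) + 1) * x / 2)) := by
      rw [hr, ← Real.exp_nat_mul, ← Real.exp_add]
      congr 1
      ring
    calc |g (((k : ℝ) + 1) * x / L) * Real.cos (((k : ℝ) + 1) * x * τ)| /
          Real.sinh (((k : ℝ) + 1) * x / 2)
        ≤ (M + 1) / Real.sinh (((k : ℝ) + 1) * x / 2) :=
          by gcongr
      _ = (M + 1) * (Real.sinh (((k : ℝ) + 1) * x / 2))⁻¹ := by rw [div_eq_mul_inv]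
      _ ≤ (M + 1) * (c * Real.exp (((k : ℝ) + 1) * x / 2))⁻¹ :=
          mul_le_mul_of_nonneg_left hiv (by linarith)
      _ = A * Real.exp (-(((k : ℝ) + 1) * x / 2)) := by
          rw [hA, Real.exp_neg, mul_inv, div_eq_mul_inv]
          ring
      _ = A * (r * r ^ k) := by rw [hexp]
      _ = A * r * r ^ k := by ring
  have hgeo : HasSum (fun k : ℕ => A * r * r ^ k) (A * r * (1 - r)⁻¹) :=
    (hasSum_geometric_of_lt_one hr0.le hr1).mul_left (A * r)
  have htsum : ‖∑' k : ℕ,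
      g (((k : ℝ) + 1) * x / L) * Real.cos (((k : ℝ) + 1) * x * τ) /
        Real.sinh (((k : ℝ) + 1) * x / 2)‖ ≤ A * r * (1 - r)⁻¹ :=
    tsum_of_norm_bounded hgeo hterm
  rw [Hfun, abs_mul]
  have h2xL : |2 * x / L| = 2 * x / L := abs_of_pos (by positivity)
  rw [h2xL]
  have hrle : r ≤ Real.exp (-(1/4)) := Real.exp_le_exp.mpr (by linarith)
  have hinv : (1 - r)⁻¹ ≤ (1 - Real.exp (-(1/4)))⁻¹ :=
    inv_anti₀ hd (by linarith)
  calc 2 * x / L * ‖∑' k : ℕ,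
        g (((k : ℝ) + 1) * x / L) * Real.cos (((k : ℝ) + 1) * x * τ) /
          Real.sinh (((k : ℝ) + 1) * x / 2)‖
      ≤ 2 * x / L * (A * r * (1 - r)⁻¹) :=
        mul_le_mul_of_nonneg_left htsum (by positivity)
    _ ≤ 2 * x / L * (A * r * (1 - Real.exp (-(1/4)))⁻¹) := by
        apply mul_le_mul_of_nonneg_left _ (by positivity)
        exact mul_le_mul_of_nonneg_left hinv (by positivity)
    _ = 2 * A / (1 - Real.exp (-(1/4))) * (1 / L) * x * r := by
        field_simp
end

section
/- Let g : ℝ → ℝ be an even, smooth, compactly supported function with g(0) > 0, let L > 0 and τ ≥ 0 be fixed, and define H_{L,τ}(x) = (2x/L)·∑_{k=1}^∞ g(kx/L)·cos(kxτ)/sinh(kx/2) for x > 0. Then there exist constants c > 0 and x₀ ∈ (0, 1) such that for all 0 < x < x₀ one has H_{L,τ}(x) ≥ c·log(1/x); in particular H_{L,τ}(x) → +∞ as x → 0⁺. -/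
open Real Filter

private lemma sinh_le_three_mul {t : ℝ} (h0 : 0 ≤ t) (h1 : t ≤ 1 / 2) :
    Real.sinh t ≤ 3 * t := by
  rw [Real.sinh_eq]
  have h2 : Real.exp (2 * t) ≤ 3 := by
    calc Real.exp (2 * t) ≤ Real.exp 1 := Real.exp_le_exp.mpr (by linarith)
    _ ≤ 3 := by linarith [Real.exp_one_lt_d9.le]
  have h3 : -(2 * t) + 1 ≤ Real.exp (-(2 * t)) := Real.add_one_le_exp _
  have h4 : Real.exp (-(2 * t)) * Real.exp (2 * t) = 1 := by
    rw [← Real.exp_add]; norm_num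
  have h5 : Real.exp (-t) * Real.exp (2 * t) = Real.exp t := by
    rw [← Real.exp_add]; ring_nf
  have h6 : Real.exp (-t) ≤ 1 := Real.exp_le_one_iff.mpr (by linarith)
  have h7 : 0 < Real.exp (-t) := Real.exp_pos _
  have h8 : 0 < Real.exp (2 * t) := Real.exp_pos _
  have h9 : Real.exp (2 * t) - 1 ≤ 2 * t * Real.exp (2 * t) := by
    nlinarith [mul_le_mul_of_nonneg_right h3 h8.le]
  have h11 : 1 ≤ Real.exp (2 * t) := Real.one_le_exp (by linarith)
  have h10 : Real.exp t - Real.exp (-t) ≤ Real.exp (2 * t) - 1 := by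
    nlinarith [mul_nonneg (by linarith : (0:ℝ) ≤ 1 - Real.exp (-t))
      (by linarith : (0:ℝ) ≤ Real.exp (2 * t) - 1)]
  nlinarith

private lemma log_le_sum_inv (N : ℕ) :
    Real.log ((N : ℝ) + 1) ≤ ∑ k ∈ Finset.range N, ((k : ℝ) + 1)⁻¹ := by
  have h := log_add_one_le_harmonic N
  have h2 : ((harmonic N : ℚ) : ℝ) = ∑ k ∈ Finset.range N, ((k : ℝ) + 1)⁻¹ := by
    rw [harmonic]; push_cast; rfl
  rw [h2] at h
  convert h using 2
  push_cast; ring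

set_option maxHeartbeats 1000000 in
theorem Hfun_blowup_at_zero
    (g : ℝ → ℝ) (hg_even : ∀ x, g (-x) = g x)
    (hg_smooth : ContDiff ℝ (⊤ : ℕ∞) g) (hg_supp : HasCompactSupport g)
    (hg0 : 0 < g 0) (L τ : ℝ) (hL : 0 < L) (hτ : 0 ≤ τ) :
    (∃ c : ℝ, 0 < c ∧ ∃ x₀ : ℝ, 0 < x₀ ∧ x₀ < 1 ∧
      ∀ x : ℝ, 0 < x → x < x₀ → c * Real.log (1 / x) ≤ Hfun g L τ x) ∧
    Filter.Tendsto (Hfun g L τ) (nhdsWithin 0 (Set.Ioi 0)) Filter.atTop := by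
  -- bound on g
  obtain ⟨M, hM⟩ := hg_supp.exists_bound_of_continuous hg_smooth.continuous
  have hM0 : 0 ≤ M := (norm_nonneg (g 0)).trans (hM 0)
  -- support radius
  obtain ⟨A₀, hA₀⟩ := hg_supp.isBounded.subset_closedBall 0
  set A : ℝ := max A₀ 1 with hA_def
  have hA1 : 1 ≤ A := le_max_right _ _
  have hA0 : 0 < A := lt_of_lt_of_le one_pos hA1
  have hgz : ∀ y : ℝ, A < |y| → g y = 0 := by
    intro y hy
    apply image_eq_zero_of_notMem_tsupport
    intro hmem
    have := hA₀ hmem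
    rw [Metric.mem_closedBall, Real.dist_eq, sub_zero] at this
    exact absurd (this.trans (le_max_left A₀ 1)) (not_le.mpr hy)
  -- continuity at 0
  obtain ⟨ε, hε, hball⟩ := Metric.continuousAt_iff.mp
    (hg_smooth.continuous.continuousAt (x := 0)) (g 0 / 2) (by positivity)
  have hgl : ∀ y : ℝ, |y| < ε → g 0 / 2 ≤ g y := by
    intro y hy
    have h1 : dist y 0 < ε := by rwa [Real.dist_eq, sub_zero]
    have h2 := hball h1
    rw [Real.dist_eq] at h2
    have := (abs_lt.mp h2).1
    linarith
  -- the small scale δ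
  set δ : ℝ := min (min (ε * L / 2) 1) (π / (3 * (τ + 1))) with hδ_def
  have hδ : 0 < δ := by
    apply lt_min (lt_min (by positivity) one_pos)
    have := Real.pi_pos
    positivity
  have hδεL : δ ≤ ε * L / 2 := (min_le_left _ _).trans (min_le_left _ _)
  have hδ1 : δ ≤ 1 := (min_le_left _ _).trans (min_le_right _ _)
  have hδτ : δ * τ ≤ π / 3 := by
    have h1 : δ ≤ π / (3 * (τ + 1)) := min_le_right _ _
    have hπ := Real.pi_pos
    have h2 : δ * τ ≤ (π / (3 * (τ + 1))) * τ :=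
      mul_le_mul_of_nonneg_right h1 hτ
    have h3 : (π / (3 * (τ + 1))) * τ ≤ π / 3 := by
      rw [div_mul_eq_mul_div, div_le_div_iff₀ (by positivity) (by positivity)]
      nlinarith
    linarith
  -- constants
  set C : ℝ := M / Real.sinh (δ / 2) with hC_def
  have hsδ : 0 < Real.sinh (δ / 2) := Real.sinh_pos_iff.mpr (by positivity)
  have hC0 : 0 ≤ C := div_nonneg hM0 hsδ.le
  set B : ℝ := 2 * C * (A * L + 2) / L with hB_def
  have hB0 : 0 ≤ B := by positivity
  set c : ℝ := g 0 / (6 * L) with hc_def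
  have hc : 0 < c := by positivity
  set D : ℝ := B - (g 0 / (3 * L)) * Real.log δ with hD_def
  set x₀ : ℝ := min δ (Real.exp (-(6 * L / g 0) * |D| - 1)) with hx₀_def
  have hx₀pos : 0 < x₀ := lt_min hδ (Real.exp_pos _)
  have hx₀lt1 : x₀ < 1 := by
    apply lt_of_le_of_lt (min_le_right _ _)
    rw [Real.exp_lt_one_iff]
    have : 0 ≤ (6 * L / g 0) * |D| := by positivity
    linarith
  have key : ∀ x : ℝ, 0 < x → x < x₀ → c * Real.log (1 / x) ≤ Hfun g L τ x := by
    intro x hx hxx₀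
    have hxδ : x < δ := hxx₀.trans_le (min_le_left _ _)
    have hx1 : x < 1 := hxx₀.trans hx₀lt1
    set N : ℕ := ⌊δ / x⌋₊ with hN_def
    set K : ℕ := max N (⌈A * L / x⌉₊ + 1) with hK_def
    set f : ℕ → ℝ := fun k =>
      g (((k : ℝ) + 1) * x / L) * Real.cos (((k : ℝ) + 1) * x * τ) /
        Real.sinh (((k : ℝ) + 1) * x / 2) with hf_def
    have hNK : N ≤ K := le_max_left _ _
    -- vanishing outside range K
    have hfzero : ∀ k ∉ Finset.range K, f k = 0 := by
      intro k hk
      rw [Finset.mem_range, not_lt] at hk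
      have hk1 : ⌈A * L / x⌉₊ + 1 ≤ k := le_trans (le_max_right _ _) hk
      have hk2 : A * L / x ≤ (k : ℝ) := by
        calc A * L / x ≤ (⌈A * L / x⌉₊ : ℝ) := Nat.le_ceil _
        _ ≤ (k : ℝ) := by exact_mod_cast Nat.le_of_succ_le hk1
      have harg : A < ((k : ℝ) + 1) * x / L := by
        rw [div_le_iff₀ hx] at hk2
        rw [lt_div_iff₀ hL]
        nlinarith
      have : g (((k : ℝ) + 1) * x / L) = 0 := by
        apply hgz
        rw [abs_of_pos (hA0.trans harg)]
        exact harg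
      simp [hf_def, this]
    have hsummable : Summable f := summable_of_ne_finset_zero hfzero
    have htsum : ∑' k : ℕ, f k = ∑ k ∈ Finset.range K, f k := tsum_eq_sum hfzero
    -- N * x ≤ δ
    have hNx : (N : ℝ) * x ≤ δ := by
      have h1 : (N : ℝ) ≤ δ / x := Nat.floor_le (by positivity)
      rw [← le_div_iff₀ hx]
      exact h1
    -- main-term lower bound
    have hmain : ∀ k ∈ Finset.range N, (g 0 / (6 * x)) * ((k : ℝ) + 1)⁻¹ ≤ f k := by
      intro k hk
      rw [Finset.mem_range] at hk
      set t : ℝ := ((k : ℝ) + 1) * x with ht_def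
      have hk1 : ((k : ℝ) + 1) ≤ (N : ℝ) := by exact_mod_cast Nat.succ_le_of_lt hk
      have ht0 : 0 < t := by positivity
      have htδ : t ≤ δ := by
        calc t ≤ (N : ℝ) * x := mul_le_mul_of_nonneg_right hk1 hx.le
        _ ≤ δ := hNx
      have hgarg : g 0 / 2 ≤ g (t / L) := by
        apply hgl
        rw [abs_of_pos (by positivity)]
        rw [div_lt_iff₀ hL]
        nlinarith [hε]
      have hcos : 1 / 2 ≤ Real.cos (t * τ) := by
        rw [← Real.cos_pi_div_three]
        apply Real.cos_le_cos_of_nonneg_of_le_pi (by positivity)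
          (by linarith [Real.pi_pos])
        calc t * τ ≤ δ * τ := mul_le_mul_of_nonneg_right htδ hτ
        _ ≤ π / 3 := hδτ
      have hsinh_pos : 0 < Real.sinh (t / 2) := Real.sinh_pos_iff.mpr (by positivity)
      have hsinh_le : Real.sinh (t / 2) ≤ 3 * (t / 2) :=
        sinh_le_three_mul (by positivity) (by linarith)
      have hnum : g 0 / 4 ≤ g (t / L) * Real.cos (t * τ) := by nlinarith
      have hfk : f k = g (t / L) * Real.cos (t * τ) / Real.sinh (t / 2) := rfl
      have hstep : g 0 / 4 / (3 * (t / 2)) ≤ f k := by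
        rw [hfk]
        exact div_le_div₀ (by nlinarith) hnum hsinh_pos hsinh_le
      have heq : (g 0 / (6 * x)) * ((k : ℝ) + 1)⁻¹ = g 0 / 4 / (3 * (t / 2)) := by
        rw [ht_def]
        have hk0 : ((k : ℝ) + 1) ≠ 0 := by positivity
        field_simp
        ring
      rw [heq]; exact hstep
    have hmainsum : (g 0 / (6 * x)) * Real.log ((N : ℝ) + 1) ≤ ∑ k ∈ Finset.range N, f k := by
      calc (g 0 / (6 * x)) * Real.log ((N : ℝ) + 1)
          ≤ (g 0 / (6 * x)) * ∑ k ∈ Finset.range N, ((k : ℝ) + 1)⁻¹ :=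
            mul_le_mul_of_nonneg_left (log_le_sum_inv N) (by positivity)
        _ = ∑ k ∈ Finset.range N, (g 0 / (6 * x)) * ((k : ℝ) + 1)⁻¹ := Finset.mul_sum _ _ _
        _ ≤ ∑ k ∈ Finset.range N, f k := Finset.sum_le_sum hmain
    have hlogN : Real.log (δ / x) ≤ Real.log ((N : ℝ) + 1) :=
      Real.log_le_log (by positivity) (Nat.lt_floor_add_one _).le
    -- tail lower bound
    have htail : ∀ k ∈ Finset.Ico N K, -C ≤ f k := by
      intro k hk
      rw [Finset.mem_Ico] at hk
      set t : ℝ := ((k : ℝ) + 1) * x with ht_def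
      have hkN : (N : ℝ) ≤ (k : ℝ) := Nat.cast_le.mpr hk.1
      have hδt : δ ≤ t := by
        have h1 : δ / x < (N : ℝ) + 1 := Nat.lt_floor_add_one _
        rw [div_lt_iff₀ hx] at h1
        rw [ht_def]
        nlinarith
      have hs_pos : 0 < Real.sinh (t / 2) := Real.sinh_pos_iff.mpr (by positivity)
      have hs_ge : Real.sinh (δ / 2) ≤ Real.sinh (t / 2) :=
        Real.sinh_le_sinh.mpr (by linarith)
      have habs : |g (t / L) * Real.cos (t * τ)| ≤ M := by
        rw [abs_mul]
        calc |g (t / L)| * |Real.cos (t * τ)| ≤ M * 1 :=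
          mul_le_mul (hM _) (Real.abs_cos_le_one _) (abs_nonneg _) hM0
        _ = M := mul_one M
      have hfk : f k = g (t / L) * Real.cos (t * τ) / Real.sinh (t / 2) := rfl
      have habs2 : |f k| ≤ C := by
        rw [hfk, abs_div, abs_of_pos hs_pos]
        exact div_le_div₀ hM0 habs hsδ hs_ge
      linarith [neg_abs_le (f k), (abs_le.mp habs2).1]
    have htailsum : -((K : ℝ) * C) ≤ ∑ k ∈ Finset.Ico N K, f k := by
      have h1 : ∑ _k ∈ Finset.Ico N K, (-C) ≤ ∑ k ∈ Finset.Ico N K, f k :=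
        Finset.sum_le_sum htail
      have h2 : ∑ _k ∈ Finset.Ico N K, (-C : ℝ) = -(((K - N : ℕ) : ℝ) * C) := by
        rw [Finset.sum_const, Nat.card_Ico, nsmul_eq_mul]; ring
      have h3 : ((K - N : ℕ) : ℝ) ≤ (K : ℝ) := Nat.cast_le.mpr (Nat.sub_le _ _)
      have h4 : ((K - N : ℕ) : ℝ) * C ≤ (K : ℝ) * C := mul_le_mul_of_nonneg_right h3 hC0
      linarith
    have hsplit : ∑ k ∈ Finset.range K, f k
        = ∑ k ∈ Finset.range N, f k + ∑ k ∈ Finset.Ico N K, f k := by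
      have h := (Finset.sum_Ico_consecutive f (Nat.zero_le N) hNK).symm
      simpa [← Finset.range_eq_Ico] using h
    -- bound on K * x
    have hKx : (K : ℝ) * x ≤ A * L + 2 := by
      have hceil : (⌈A * L / x⌉₊ : ℝ) < A * L / x + 1 := Nat.ceil_lt_add_one (by positivity)
      have hALx : A * L / x * x = A * L := div_mul_cancel₀ _ hx.ne'
      have hKcast : (K : ℝ) = max (N : ℝ) ((⌈A * L / x⌉₊ : ℝ) + 1) := by
        rw [hK_def]; push_cast [Nat.cast_max]; ring_nf
      rw [hKcast, max_mul_of_nonneg _ _ hx.le]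
      apply max_le
      · nlinarith
      · nlinarith
    -- put it together
    have hHeq : Hfun g L τ x = (2 * x / L) * ∑ k ∈ Finset.range K, f k := by
      rw [← htsum]; rfl
    have hSlow : (g 0 / (6 * x)) * Real.log (δ / x) - (K : ℝ) * C
        ≤ ∑ k ∈ Finset.range K, f k := by
      rw [hsplit]
      have ha : (g 0 / (6 * x)) * Real.log (δ / x) ≤ ∑ k ∈ Finset.range N, f k :=
        le_trans (mul_le_mul_of_nonneg_left hlogN (by positivity)) hmainsum
      linarith
    have h2xL : (0:ℝ) < 2 * x / L := by positivity
    have hmulL := mul_le_mul_of_nonneg_left hSlow h2xL.le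
    have hexp : (2 * x / L) * ((g 0 / (6 * x)) * Real.log (δ / x) - (K : ℝ) * C)
        = (2 * x / L) * ((g 0 / (6 * x)) * Real.log (δ / x)) - (2 * x / L) * ((K : ℝ) * C) := by
      ring
    have hident : (2 * x / L) * ((g 0 / (6 * x)) * Real.log (δ / x))
        = (g 0 / (3 * L)) * Real.log (δ / x) := by
      field_simp
      ring
    have htb : (2 * x / L) * ((K : ℝ) * C) ≤ B := by
      have h1 : (2 * x / L) * ((K : ℝ) * C) = (2 * C / L) * ((K : ℝ) * x) := by ring
      rw [h1, hB_def]
      calc (2 * C / L) * ((K : ℝ) * x) ≤ (2 * C / L) * (A * L + 2) :=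
        mul_le_mul_of_nonneg_left hKx (by positivity)
      _ = 2 * C * (A * L + 2) / L := by ring
    have hlogdx : Real.log (δ / x) = Real.log δ - Real.log x := Real.log_div hδ.ne' hx.ne'
    have hHlow : (g 0 / (3 * L)) * (Real.log δ - Real.log x) - B ≤ Hfun g L τ x := by
      rw [hHeq, ← hlogdx]
      linarith [hmulL, htb]
    -- conclude using smallness of x
    have hlogx : Real.log x < -(6 * L / g 0) * |D| - 1 := by
      have h1 : x < Real.exp (-(6 * L / g 0) * |D| - 1) := hxx₀.trans_le (min_le_right _ _)
      have h2 := Real.log_lt_log hx h1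
      rwa [Real.log_exp] at h2
    rw [one_div, Real.log_inv]
    have h2c : g 0 / (3 * L) = 2 * c := by rw [hc_def]; ring
    have hcu : |D| + c ≤ c * (-Real.log x) := by
      have h1 : (6 * L / g 0) * |D| + 1 ≤ -Real.log x := by linarith
      have h2 : c * ((6 * L / g 0) * |D| + 1) ≤ c * (-Real.log x) :=
        mul_le_mul_of_nonneg_left h1 hc.le
      have h3 : c * ((6 * L / g 0) * |D| + 1) = |D| + c := by
        rw [hc_def]; field_simp
      linarith
    have hDrel : B - 2 * c * Real.log δ ≤ |D| := by
      calc B - 2 * c * Real.log δ = D := by rw [hD_def, h2c]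
      _ ≤ |D| := le_abs_self D
    have hfin : (g 0 / (3 * L)) * (Real.log δ - Real.log x) - B
        = 2 * c * (-Real.log x) + (2 * c * Real.log δ - B) := by
      rw [h2c]; ring
    linarith [hHlow, hcu, hDrel, hfin, hc]
  refine ⟨⟨c, hc, x₀, hx₀pos, hx₀lt1, key⟩, ?_⟩
  have h1 : Tendsto (fun x : ℝ => c * Real.log (1 / x)) (nhdsWithin 0 (Set.Ioi 0)) atTop := by
    have h2 : Tendsto (fun x : ℝ => Real.log (1 / x)) (nhdsWithin 0 (Set.Ioi 0)) atTop := by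
      simp only [one_div, Real.log_inv]
      exact tendsto_neg_atBot_atTop.comp Real.tendsto_log_nhdsGT_zero
    exact h2.const_mul_atTop hc
  apply tendsto_atTop_mono' _ _ h1
  filter_upwards [Ioo_mem_nhdsGT_of_mem (Set.left_mem_Ico.mpr hx₀pos)] with x hx
  exact key x hx.1 hx.2
end

section
/- Let g : ℝ → ℝ be an even, smooth, compactly supported function and define H_{L,τ}(x) = (2x/L)·∑_{k=1}^∞ g(kx/L)·cos(kxτ)/sinh(kx/2) for x > 0. For every integer m ≥ 3 there is a constant C_m > 0 (depending only on m and g) such that for all L > 2 and all τ ≥ 0, ∫_0^∞ |H_{L,τ}(x)|^m · (2·(sinh(x/2))²/x) dx ≤ C_m·((log L)/L)^m. -/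
open Real Filter MeasureTheory

/-- `x (1 - log x)^m ≤ m^m` for `0 < x ≤ 1`, `1 ≤ m`. -/
lemma aux_xlog (m : ℕ) (hm : 1 ≤ m) {x : ℝ} (hx : 0 < x) (hx1 : x ≤ 1) :
    x * (1 - Real.log x) ^ m ≤ (m : ℝ) ^ m := by
  set y : ℝ := -Real.log x with hy
  have hy0 : 0 ≤ y := by
    have := Real.log_nonpos hx.le hx1
    simp [hy]; linarith
  have hm1 : (1 : ℝ) ≤ m := by exact_mod_cast hm
  have h1 : 1 - Real.log x = 1 + y := by ring
  have h2 : (1 : ℝ) + y ≤ m * Real.exp (y / m) := by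
    have := Real.add_one_le_exp (y / m)
    have hmpos : (0 : ℝ) < m := by linarith
    have : (m : ℝ) * (y / m + 1) ≤ m * Real.exp (y / m) :=
      mul_le_mul_of_nonneg_left this (by linarith)
    have hmy : (m : ℝ) * (y / m + 1) = y + m := by field_simp
    nlinarith
  have h3 : (1 + y) ^ m ≤ (m * Real.exp (y / m)) ^ m :=
    pow_le_pow_left₀ (by linarith) h2 m
  have h4 : (m * Real.exp (y / m)) ^ m = (m : ℝ) ^ m * Real.exp y := by
    rw [mul_pow, ← Real.exp_nat_mul]
    congr 1
    field_simp
  have hxe : x = Real.exp (-y) := by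
    rw [hy, neg_neg, Real.exp_log hx]
  rw [h1, hxe]
  calc Real.exp (-y) * (1 + y) ^ m ≤ Real.exp (-y) * ((m : ℝ) ^ m * Real.exp y) := by
        apply mul_le_mul_of_nonneg_left _ (Real.exp_nonneg _)
        rw [← h4]; exact h3
    _ = (m : ℝ) ^ m := by
        rw [← mul_assoc, mul_comm (Real.exp (-y)), mul_assoc, ← Real.exp_add]
        simp

/-- `sinh t ≥ (t/4) e^{t/2}` for `t ≥ 0`. -/
lemma aux_sinh (t : ℝ) (ht : 0 ≤ t) : t / 4 * Real.exp (t / 2) ≤ Real.sinh t := by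
  rcases le_or_gt t 1 with h1 | h1
  · have he : Real.exp (t / 2) ≤ 4 := by
      calc Real.exp (t / 2) ≤ Real.exp 1 := Real.exp_le_exp.2 (by linarith)
        _ ≤ 4 := by linarith [Real.exp_one_lt_d9.le]
    have : t / 4 * Real.exp (t / 2) ≤ t := by nlinarith [Real.exp_nonneg (t/2)]
    calc t / 4 * Real.exp (t / 2) ≤ t := this
      _ ≤ Real.sinh t := Real.self_le_sinh_iff.2 ht
  · -- t > 1 : sinh t ≥ e^t/4 ≥ (t/4) e^{t/2}
    have h2 : Real.exp t / 4 ≤ Real.sinh t := by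
      rw [Real.sinh_eq]
      have : (2:ℝ) ≤ Real.exp t ^ 2 := by
        have h3 : (1:ℝ) + 1 ≤ Real.exp t := by
          have := Real.add_one_le_exp t; linarith
        nlinarith
      have hexp := Real.exp_pos t
      have hinv : Real.exp (-t) = (Real.exp t)⁻¹ := Real.exp_neg t
      rw [hinv]
      rw [div_le_div_iff₀ (by norm_num) (by norm_num)]
      have : (Real.exp t)⁻¹ * Real.exp t = 1 := inv_mul_cancel₀ (ne_of_gt hexp)
      nlinarith [inv_nonneg.2 hexp.le]
    have h3 : t ≤ Real.exp (t / 2) := by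
      have h4 : (1 + t/4) ^ 2 ≤ (Real.exp (t/4)) ^ 2 := by
        apply pow_le_pow_left₀ (by linarith) (by linarith [Real.add_one_le_exp (t/4)])
      have h5 : (Real.exp (t/4)) ^ 2 = Real.exp (t/2) := by
        rw [sq, ← Real.exp_add]; ring_nf
      nlinarith [sq_nonneg (1 - t/4)]
    have h6 : t / 4 * Real.exp (t / 2) ≤ Real.exp (t/2) / 4 * Real.exp (t/2) := by
      apply mul_le_mul_of_nonneg_right (by linarith) (Real.exp_nonneg _)
    have h7 : Real.exp (t/2) * Real.exp (t/2) = Real.exp t := by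
      rw [← Real.exp_add]; norm_num
    calc t / 4 * Real.exp (t / 2) ≤ Real.exp (t/2) / 4 * Real.exp (t/2) := h6
      _ = Real.exp t / 4 := by rw [div_mul_eq_mul_div, h7]
      _ ≤ Real.sinh t := h2

/-- `sinh ((n+1) t) ≥ (n+1) sinh t` for `t ≥ 0`. -/
lemma aux_sinh_mul (n : ℕ) (t : ℝ) (ht : 0 ≤ t) :
    ((n : ℝ) + 1) * Real.sinh t ≤ Real.sinh (((n : ℝ) + 1) * t) := by
  induction n with
  | zero => simp
  | succ n ih =>
    have h1 : ((n : ℝ) + 1 + 1) * t = ((n : ℝ) + 1) * t + t := by push_cast; ring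
    push_cast
    rw [h1, Real.sinh_add]
    have hc1 := Real.one_le_cosh (((n : ℝ) + 1) * t)
    have hc2 := Real.one_le_cosh t
    have hs1 : 0 ≤ Real.sinh t := Real.sinh_nonneg_iff.2 ht
    have hs2 : 0 ≤ Real.sinh (((n : ℝ) + 1) * t) := Real.sinh_nonneg_iff.2 (by positivity)
    nlinarith

/-- Harmonic sum bound. -/
lemma aux_harmonic (N : ℕ) :
    (∑ k ∈ Finset.range N, (1 : ℝ) / (k + 1)) ≤ 1 + Real.log N := by
  induction N with
  | zero => simp
  | succ N ih =>
    rw [Finset.sum_range_succ]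
    rcases Nat.eq_zero_or_pos N with h | h
    · subst h; simp
    · have hN : (0 : ℝ) < N := by exact_mod_cast h
      have key : Real.log N + 1 / ((N : ℝ) + 1) ≤ Real.log (N + 1) := by
        have hstep : Real.log ((N : ℝ) / (N + 1)) ≤ (N : ℝ) / (N + 1) - 1 :=
          Real.log_le_sub_one_of_pos (by positivity)
        rw [Real.log_div (ne_of_gt hN) (by positivity)] at hstep
        have : (N : ℝ) / (N + 1) - 1 = -(1 / ((N:ℝ) + 1)) := by field_simp; ring
        rw [this] at hstep
        linarith
      push_cast
      linarith

set_option maxHeartbeats 2000000 in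
lemma pointwise_bound (g : ℝ → ℝ) (R M : ℝ) (hR : 1 ≤ R) (hM : 0 ≤ M)
    (hgR : ∀ y : ℝ, R < |y| → g y = 0) (hgM : ∀ y, |g y| ≤ M)
    (m : ℕ) (hm : 3 ≤ m) (L τ x : ℝ) (hL : 2 < L) (hx : 0 < x) :
    |Hfun g L τ x| ^ m * (2 * (Real.sinh (x / 2)) ^ 2 / x)
      ≤ (2 * (4*M)^m * (8 + (m:ℝ)^m) * ((1 + Real.log R)/Real.log 2 + 1)^m * 8^m)
        * (Real.log L / L)^m * Real.exp (-8⁻¹ * x) := by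
  have hL0 : (0:ℝ) < L := by linarith
  have hlog2 : (0:ℝ) < Real.log 2 := Real.log_pos (by norm_num)
  have hlogR : 0 ≤ Real.log R := Real.log_nonneg hR
  have hlogL : 0 < Real.log L := Real.log_pos (by linarith)
  have hlogL2 : Real.log 2 ≤ Real.log L := Real.log_le_log (by norm_num) (by linarith)
  set K : ℝ := (1 + Real.log R)/Real.log 2 + 1 with hKdef
  have hK0 : 0 ≤ K := by positivity
  have ha1 : 1 ≤ K * Real.log L := by
    have h1 : (1 + Real.log R)/Real.log 2 * Real.log 2 = 1 + Real.log R :=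
      div_mul_cancel₀ _ (ne_of_gt hlog2)
    have h2 : K * Real.log 2 ≤ K * Real.log L := mul_le_mul_of_nonneg_left hlogL2 hK0
    have h3 : K * Real.log 2 = 1 + Real.log R + Real.log 2 := by
      rw [hKdef, add_mul, h1, one_mul]
    nlinarith
  have haRL : 1 + Real.log (R * L) ≤ K * Real.log L := by
    have h1 : Real.log (R*L) = Real.log R + Real.log L :=
      Real.log_mul (by linarith) (by linarith)
    have h2 : (1 + Real.log R)/Real.log 2 * Real.log 2 ≤ (1 + Real.log R)/Real.log 2 * Real.log L :=
      mul_le_mul_of_nonneg_left hlogL2 (by positivity)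
    have h3 : (1 + Real.log R)/Real.log 2 * Real.log 2 = 1 + Real.log R :=
      div_mul_cancel₀ _ (ne_of_gt hlog2)
    rw [hKdef]; nlinarith
  have hs : 0 < Real.sinh (x/2) := Real.sinh_pos_iff.2 (by linarith)
  set s : ℝ := Real.sinh (x/2) with hsdef
  set f : ℕ → ℝ := fun k =>
    g (((k : ℝ) + 1) * x / L) * Real.cos (((k : ℝ) + 1) * x * τ) /
      Real.sinh (((k : ℝ) + 1) * x / 2) with hfdef
  have hmm : (0:ℝ) ≤ (m:ℝ)^m := by positivity
  have hRHS : 0 ≤ (2 * (4*M)^m * (8 + (m:ℝ)^m) * K^m * 8^m)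
        * (Real.log L / L)^m * Real.exp (-8⁻¹ * x) := by
    apply mul_nonneg (mul_nonneg _ (by positivity)) (Real.exp_nonneg _)
    have : (0:ℝ) ≤ (4*M)^m := pow_nonneg (by linarith) m
    positivity
  rcases le_or_gt x (R*L) with hxRL | hxRL
  swap
  · -- x > R*L : everything vanishes
    have hz : ∀ k : ℕ, f k = 0 := by
      intro k
      have hk1 : (1:ℝ) ≤ (k:ℝ) + 1 := by
        have := Nat.cast_nonneg (α := ℝ) k; linarith
      have harg : R < ((k:ℝ) + 1) * x / L := by
        rw [lt_div_iff₀ hL0]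
        nlinarith
      have : g (((k : ℝ) + 1) * x / L) = 0 := by
        apply hgR
        rw [abs_of_pos (by nlinarith)]
        exact harg
      simp [hfdef, this]
    have htz : Hfun g L τ x = 0 := by
      have : (∑' k : ℕ, f k) = 0 := by
        rw [tsum_eq_sum (s := (∅ : Finset ℕ)) (fun b _ => hz b), Finset.sum_empty]
      rw [Hfun]
      rw [show (∑' (k : ℕ), g (((k : ℝ) + 1) * x / L) * Real.cos (((k : ℝ) + 1) * x * τ) /
          Real.sinh (((k : ℝ) + 1) * x / 2)) = (∑' k : ℕ, f k) from rfl, this, mul_zero]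
    rw [htz, abs_zero, zero_pow (by omega : m ≠ 0), zero_mul]
    exact hRHS
  -- main case : x ≤ R*L
  have hRLx1 : (1:ℝ) ≤ R*L/x := (one_le_div hx).2 hxRL
  set ℓ : ℝ := Real.log (R*L/x) with hldef
  have hℓ : 0 ≤ ℓ := Real.log_nonneg hRLx1
  have hℓeq : ℓ = Real.log (R*L) - Real.log x := by
    rw [hldef, Real.log_div (by positivity) (ne_of_gt hx)]
  set N : ℕ := ⌈R*L/x⌉₊ with hNdef
  have hN1 : 1 ≤ N := Nat.one_le_ceil_iff.2 (by positivity)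
  have hNge : R*L/x ≤ (N:ℝ) := Nat.le_ceil _
  have hNle : (N:ℝ) ≤ 2*(R*L/x) := by
    have := Nat.ceil_lt_add_one (show (0:ℝ) ≤ R*L/x by positivity)
    have : (N:ℝ) < R*L/x + 1 := this
    linarith
  have htsum : (∑' k : ℕ, f k) = ∑ k ∈ Finset.range N, f k := by
    apply tsum_eq_sum
    intro k hk
    have hkN : N ≤ k := by simpa using hk
    have hkx : R*L/x < (k:ℝ) + 1 := by
      have : (N:ℝ) ≤ (k:ℝ) := by exact_mod_cast hkN
      linarith
    have harg : R < ((k:ℝ) + 1) * x / L := by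
      rw [lt_div_iff₀ hL0]
      rw [div_lt_iff₀ hx] at hkx
      nlinarith
    have hg0 : g (((k : ℝ) + 1) * x / L) = 0 := by
      apply hgR
      rw [abs_of_pos (by nlinarith)]
      exact harg
    simp [hfdef, hg0]
  have hfk : ∀ k ∈ Finset.range N, |f k| ≤ (M/s) * (1/((k:ℝ)+1)) := by
    intro k _
    have hk1 : (0:ℝ) < (k:ℝ) + 1 := by positivity
    have hdenom : ((k:ℝ)+1) * s ≤ Real.sinh (((k : ℝ) + 1) * x / 2) := by
      have := aux_sinh_mul k (x/2) (by linarith)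
      rw [show ((k:ℝ)+1) * (x/2) = ((k:ℝ)+1)*x/2 by ring] at this
      exact this
    have hdpos : (0:ℝ) < ((k:ℝ)+1) * s := by positivity
    have hnum : |g (((k : ℝ) + 1) * x / L) * Real.cos (((k : ℝ) + 1) * x * τ)| ≤ M := by
      rw [abs_mul]
      calc |g (((k : ℝ) + 1) * x / L)| * |Real.cos (((k : ℝ) + 1) * x * τ)|
          ≤ M * 1 := mul_le_mul (hgM _) (Real.abs_cos_le_one _) (abs_nonneg _) hM
        _ = M := mul_one M
    have habs : |f k| = |g (((k : ℝ) + 1) * x / L) * Real.cos (((k : ℝ) + 1) * x * τ)| /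
        Real.sinh (((k : ℝ) + 1) * x / 2) := by
      rw [hfdef]
      rw [abs_div, abs_of_pos (lt_of_lt_of_le hdpos hdenom)]
    rw [habs]
    calc |g (((k : ℝ) + 1) * x / L) * Real.cos (((k : ℝ) + 1) * x * τ)| /
        Real.sinh (((k : ℝ) + 1) * x / 2)
        ≤ M / (((k:ℝ)+1) * s) := div_le_div₀ hM hnum hdpos hdenom
      _ = (M/s) * (1/((k:ℝ)+1)) := by
          rw [div_mul_div_comm, mul_one, mul_comm ((k:ℝ)+1) s]
  have hsum : |∑' k : ℕ, f k| ≤ (M/s) * (1 + Real.log N) := by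
    rw [htsum]
    calc |∑ k ∈ Finset.range N, f k| ≤ ∑ k ∈ Finset.range N, |f k| :=
          Finset.abs_sum_le_sum_abs _ _
      _ ≤ ∑ k ∈ Finset.range N, (M/s) * (1/((k:ℝ)+1)) := Finset.sum_le_sum hfk
      _ = (M/s) * ∑ k ∈ Finset.range N, (1:ℝ)/((k:ℝ)+1) := by rw [Finset.mul_sum]
      _ ≤ (M/s) * (1 + Real.log N) := by
          apply mul_le_mul_of_nonneg_left (aux_harmonic N) (by positivity)
  have hlogN : 1 + Real.log N ≤ 2 * (1 + ℓ) := by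
    have hNpos : (0:ℝ) < N := by exact_mod_cast hN1
    have h1 : Real.log N ≤ Real.log (2 * (R*L/x)) := Real.log_le_log hNpos hNle
    have h2 : Real.log (2 * (R*L/x)) = Real.log 2 + ℓ := by
      rw [Real.log_mul (by norm_num) (by positivity), hldef]
    have h3 : Real.log 2 ≤ 1 := by
      have := Real.log_le_sub_one_of_pos (show (0:ℝ) < 2 by norm_num)
      linarith
    rw [h2] at h1
    linarith
  have hH : |Hfun g L τ x| ≤ 2 * x / L * ((M/s) * (2 * (1 + ℓ))) := by
    rw [Hfun]
    rw [show (∑' (k : ℕ), g (((k : ℝ) + 1) * x / L) * Real.cos (((k : ℝ) + 1) * x * τ) /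
        Real.sinh (((k : ℝ) + 1) * x / 2)) = (∑' k : ℕ, f k) from rfl]
    rw [abs_mul, abs_of_pos (show (0:ℝ) < 2*x/L by positivity)]
    apply mul_le_mul_of_nonneg_left _ (by positivity)
    calc |∑' k : ℕ, f k| ≤ (M/s) * (1 + Real.log N) := hsum
      _ ≤ (M/s) * (2 * (1 + ℓ)) := by
          apply mul_le_mul_of_nonneg_left hlogN (by positivity)
  set B : ℝ := 2 * x / L * ((M/s) * (2 * (1 + ℓ))) with hBdef
  have hB0 : 0 ≤ B := by positivity
  have hBeq : B = (4*M/L) * ((1 + ℓ) * (x/s)) := by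
    rw [hBdef]; field_simp; ring
  obtain ⟨n, hmn⟩ : ∃ n, m = n + 3 := ⟨m - 3, by omega⟩
  have step1 : |Hfun g L τ x| ^ m * (2 * s ^ 2 / x) ≤ B^m * (2 * s^2 / x) := by
    apply mul_le_mul_of_nonneg_right (pow_le_pow_left₀ (abs_nonneg _) hH m)
    apply div_nonneg (by positivity) hx.le
  have e1 : B^m = (4*M/L)^m * ((1+ℓ)^m * (x/s)^m) := by
    rw [hBeq, mul_pow, mul_pow]
  have e3 : (x/s)^2 * (2*s^2/x) = 2*x := by
    field_simp
  have hid : B^m * (2 * s^2 / x) = 2 * (4*M/L)^m * ((1+ℓ)^m * x) * (x/s)^(n+1) := by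
    calc B^m * (2 * s^2 / x)
        = (4*M/L)^m * (1+ℓ)^m * ((x/s)^(n+1) * ((x/s)^2 * (2*s^2/x))) := by
          rw [e1, hmn]; ring
      _ = 2 * (4*M/L)^m * ((1+ℓ)^m * x) * (x/s)^(n+1) := by rw [e3]; ring
  -- bound (1+ℓ)^m * x
  have hb1 : (1+ℓ)^m * x ≤ (8 + (m:ℝ)^m) * (K * Real.log L)^m * Real.exp (8⁻¹ * x) := by
    have hKL0 : 0 ≤ K * Real.log L := by linarith
    have hexp1 : (1:ℝ) ≤ Real.exp (8⁻¹ * x) := Real.one_le_exp (by positivity)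
    rcases le_or_gt 1 x with hx1 | hx1
    · have hlogx : 0 ≤ Real.log x := Real.log_nonneg hx1
      have h1 : 1 + ℓ ≤ K * Real.log L := by rw [hℓeq]; linarith
      have h2 : (1+ℓ)^m ≤ (K * Real.log L)^m := pow_le_pow_left₀ (by linarith) h1 m
      have h3 : x ≤ 8 * Real.exp (8⁻¹ * x) := by
        have := Real.add_one_le_exp (8⁻¹ * x)
        nlinarith
      calc (1+ℓ)^m * x ≤ (K * Real.log L)^m * (8 * Real.exp (8⁻¹ * x)) :=
            mul_le_mul h2 h3 hx.le (by positivity)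
        _ ≤ (8 + (m:ℝ)^m) * (K * Real.log L)^m * Real.exp (8⁻¹ * x) := by
            have h4 : (0:ℝ) ≤ (m:ℝ)^m * ((K * Real.log L)^m * Real.exp (8⁻¹ * x)) := by
              positivity
            nlinarith [pow_nonneg hKL0 m, Real.exp_nonneg (8⁻¹ * x)]
    · have hlogx : Real.log x ≤ 0 := Real.log_nonpos hx.le hx1.le
      have h1 : 1 + ℓ ≤ (K * Real.log L) * (1 - Real.log x) := by
        have h5 : 0 ≤ (K * Real.log L - 1) * (0 - Real.log x) :=
          mul_nonneg (by linarith) (by linarith)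
        rw [hℓeq]; nlinarith
      have h2 : (1+ℓ)^m ≤ (K * Real.log L)^m * (1 - Real.log x)^m := by
        rw [← mul_pow]
        exact pow_le_pow_left₀ (by linarith) h1 m
      have h3 : x * (1 - Real.log x)^m ≤ (m:ℝ)^m := aux_xlog m (by omega) hx hx1.le
      have h6 : 0 ≤ (1 - Real.log x)^m := pow_nonneg (by linarith) m
      calc (1+ℓ)^m * x ≤ ((K * Real.log L)^m * (1 - Real.log x)^m) * x :=
            mul_le_mul_of_nonneg_right h2 hx.le
        _ = (K * Real.log L)^m * (x * (1 - Real.log x)^m) := by ring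
        _ ≤ (K * Real.log L)^m * (m:ℝ)^m :=
            mul_le_mul_of_nonneg_left h3 (by positivity)
        _ ≤ (8 + (m:ℝ)^m) * (K * Real.log L)^m * Real.exp (8⁻¹ * x) := by
            have h7 : (0:ℝ) ≤ (K * Real.log L)^m := by positivity
            have h8 : (K*Real.log L)^m * (m:ℝ)^m ≤ (8+(m:ℝ)^m) * (K*Real.log L)^m := by
              nlinarith
            have h9 : (8+(m:ℝ)^m) * (K*Real.log L)^m
                ≤ (8+(m:ℝ)^m) * (K*Real.log L)^m * Real.exp (8⁻¹ * x) :=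
              le_mul_of_one_le_right (mul_nonneg (by linarith) h7) hexp1
            linarith
  -- bound (x/s)^(n+1)
  have hb2 : (x/s)^(n+1) ≤ 8^m * Real.exp (-4⁻¹ * x) := by
    have hball : x/8 * Real.exp (x/4) ≤ s := by
      have := aux_sinh (x/2) (by linarith)
      rw [show (x/2)/4 = x/8 by ring, show (x/2)/2 = x/4 by ring] at this
      exact this
    have hbpos : (0:ℝ) < x/8 * Real.exp (x/4) := by positivity
    have hxs : x/s ≤ 8 * Real.exp (-4⁻¹ * x) := by
      calc x/s ≤ x / (x/8 * Real.exp (x/4)) :=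
            div_le_div_of_nonneg_left hx.le hbpos hball
        _ = 8 * Real.exp (-4⁻¹ * x) := by
            rw [show (-4⁻¹ * x) = -(x/4) by ring, Real.exp_neg]
            field_simp
    have hxs0 : 0 ≤ x/s := by positivity
    calc (x/s)^(n+1) ≤ (8 * Real.exp (-4⁻¹ * x))^(n+1) := pow_le_pow_left₀ hxs0 hxs _
      _ = 8^(n+1) * (Real.exp (-4⁻¹ * x))^(n+1) := mul_pow _ _ _
      _ ≤ 8^m * Real.exp (-4⁻¹ * x) := by
          apply mul_le_mul
          · apply pow_le_pow_right₀ (by norm_num) (by omega)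
          · apply pow_le_of_le_one (Real.exp_nonneg _) _ (by omega)
            exact Real.exp_le_one_iff.2 (by nlinarith)
          · positivity
          · positivity
  have step2 : 2 * (4*M/L)^m * ((1+ℓ)^m * x) * (x/s)^(n+1)
      ≤ 2 * (4*M/L)^m * ((8 + (m:ℝ)^m) * (K * Real.log L)^m * Real.exp (8⁻¹ * x))
        * (8^m * Real.exp (-4⁻¹ * x)) := by
    have hc0 : (0:ℝ) ≤ 2 * (4*M/L)^m := by
      have : (0:ℝ) ≤ 4*M/L := by positivity
      positivity
    apply mul_le_mul
    · exact mul_le_mul_of_nonneg_left hb1 hc0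
    · exact hb2
    · positivity
    · apply mul_nonneg hc0
      positivity
  have step3 : 2 * (4*M/L)^m * ((8 + (m:ℝ)^m) * (K * Real.log L)^m * Real.exp (8⁻¹ * x))
        * (8^m * Real.exp (-4⁻¹ * x))
      = (2 * (4*M)^m * (8 + (m:ℝ)^m) * K^m * 8^m)
        * (Real.log L / L)^m * Real.exp (-8⁻¹ * x) := by
    rw [show Real.exp (-8⁻¹ * x) = Real.exp (8⁻¹ * x) * Real.exp (-4⁻¹ * x) by
      rw [← Real.exp_add]; ring_nf]
    rw [mul_pow K (Real.log L) m, div_pow, div_pow]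
    ring
  calc |Hfun g L τ x| ^ m * (2 * s ^ 2 / x) ≤ B^m * (2 * s^2 / x) := step1
    _ = 2 * (4*M/L)^m * ((1+ℓ)^m * x) * (x/s)^(n+1) := hid
    _ ≤ _ := step2
    _ = _ := step3

theorem Hfun_moment_bound
    (g : ℝ → ℝ) (hg_even : ∀ x, g (-x) = g x)
    (hg_smooth : ContDiff ℝ (⊤ : ℕ∞) g) (hg_supp : HasCompactSupport g)
    (m : ℕ) (hm : 3 ≤ m) :
    ∃ C : ℝ, 0 < C ∧ ∀ L : ℝ, 2 < L → ∀ τ : ℝ, 0 ≤ τ →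
      (∫ x in Set.Ioi (0 : ℝ),
          |Hfun g L τ x| ^ m * (2 * (Real.sinh (x / 2)) ^ 2 / x))
        ≤ C * (Real.log L / L) ^ m := by
  obtain ⟨r, hr⟩ := hg_supp.isBounded.subset_closedBall 0
  set R : ℝ := max r 1 with hRdef
  have hR : 1 ≤ R := le_max_right _ _
  have hgR : ∀ y : ℝ, R < |y| → g y = 0 := by
    intro y hy
    apply image_eq_zero_of_notMem_tsupport
    intro hmem
    have h1 := hr hmem
    rw [Metric.mem_closedBall, Real.dist_eq, sub_zero] at h1
    have h2 : |y| ≤ R := le_trans h1 (le_max_left _ _)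
    linarith
  obtain ⟨M0, hM0⟩ := hg_supp.exists_bound_of_continuous hg_smooth.continuous
  set M : ℝ := max M0 0 with hMdef
  have hM : 0 ≤ M := le_max_right _ _
  have hgM : ∀ y, |g y| ≤ M := fun y =>
    le_trans (by simpa [Real.norm_eq_abs] using hM0 y) (le_max_left _ _)
  set A : ℝ := 2 * (4*M)^m * (8 + (m:ℝ)^m) * ((1 + Real.log R)/Real.log 2 + 1)^m * 8^m
    with hAdef
  have hlog2 : 0 < Real.log 2 := Real.log_pos (by norm_num)
  have hlogR : 0 ≤ Real.log R := Real.log_nonneg hR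
  have hA : 0 ≤ A := by
    have h1 : (0:ℝ) ≤ (4*M)^m := pow_nonneg (by linarith) m
    have h2 : (0:ℝ) ≤ ((1 + Real.log R)/Real.log 2 + 1)^m := pow_nonneg (by positivity) m
    have h3 : (0:ℝ) ≤ (8 + (m:ℝ)^m) := by positivity
    have h4 : (0:ℝ) ≤ (8:ℝ)^m := by positivity
    calc (0:ℝ) ≤ 2 * (4*M)^m * (8 + (m:ℝ)^m) * ((1 + Real.log R)/Real.log 2 + 1)^m * 8^m := by
          apply mul_nonneg (mul_nonneg (mul_nonneg (by linarith) h3) h2) h4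
      _ = A := by rw [hAdef]
  set I : ℝ := ∫ x in Set.Ioi (0:ℝ), Real.exp (-8⁻¹ * x) with hIdef
  have hI : 0 ≤ I := by
    rw [hIdef]
    exact integral_nonneg fun x => Real.exp_nonneg _
  refine ⟨A * I + 1, by nlinarith, ?_⟩
  intro L hL τ hτ
  have hL0 : (0:ℝ) < L := by linarith
  have hlogL : 0 < Real.log L := Real.log_pos (by linarith)
  have hc : 0 ≤ (Real.log L / L)^m := pow_nonneg (div_nonneg hlogL.le hL0.le) m
  have hint : Integrable (fun x => (A * (Real.log L / L)^m) * Real.exp (-8⁻¹ * x))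
      (volume.restrict (Set.Ioi 0)) :=
    (exp_neg_integrableOn_Ioi 0 (by norm_num : (0:ℝ) < 8⁻¹)).const_mul _
  calc (∫ x in Set.Ioi (0:ℝ), |Hfun g L τ x|^m * (2*(Real.sinh (x/2))^2/x))
      ≤ ∫ x in Set.Ioi (0:ℝ), (A * (Real.log L / L)^m) * Real.exp (-8⁻¹ * x) := by
        apply integral_mono_of_nonneg
        · apply ae_restrict_of_forall_mem measurableSet_Ioi
          intro x hx
          have hx0 : (0:ℝ) < x := hx
          have h5 : 0 ≤ 2*(Real.sinh (x/2))^2/x := div_nonneg (by positivity) hx0.le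
          have h6 : 0 ≤ |Hfun g L τ x|^m := pow_nonneg (abs_nonneg _) m
          exact mul_nonneg h6 h5
        · exact hint
        · apply ae_restrict_of_forall_mem measurableSet_Ioi
          intro x hx
          have h7 := pointwise_bound g R M hR hM hgR hgM m hm L τ x hL hx
          exact le_trans h7 (le_of_eq (by rw [hAdef]))
    _ = (A * (Real.log L / L)^m) * I := by
        rw [MeasureTheory.integral_const_mul, ← hIdef]
    _ = (A * I) * (Real.log L / L)^m := by ring
    _ ≤ (A * I + 1) * (Real.log L / L)^m :=
        mul_le_mul_of_nonneg_right (by linarith) hc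
end

section
/- Let g : ℝ → ℝ be an even, smooth, compactly supported function and define H_{L,τ}(x) = (2x/L)·∑_{k=1}^∞ g(kx/L)·cos(kxτ)/sinh(kx/2) for x > 0. For every integer m ≥ 3, the integrals ∫_0^∞ H_{L,τ}(x)^m · (2·(sinh(x/2))²/x) dx tend to 0 as L → ∞, uniformly in τ ≥ 0; that is, for every ε > 0 there is L₀ > 0 such that for all L > L₀ and all τ ≥ 0 the integral has absolute value less than ε. -/
open Real Filter MeasureTheory

lemma sinh_superadd (n : ℕ) {t : ℝ} (ht : 0 ≤ t) :
    (n : ℝ) * Real.sinh t ≤ Real.sinh (n * t) := by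
  induction n with
  | zero => simp
  | succ n ih =>
    have hnt : (0:ℝ) ≤ (n:ℝ) * t := by positivity
    have h1 : Real.sinh (((n:ℕ)+1 : ℕ) * t)
        = Real.sinh ((n:ℝ)*t) * Real.cosh t + Real.cosh ((n:ℝ)*t) * Real.sinh t := by
      push_cast
      rw [add_mul, one_mul, Real.sinh_add]
    have h2 : 1 ≤ Real.cosh t := Real.one_le_cosh t
    have h3 : 1 ≤ Real.cosh ((n:ℝ)*t) := Real.one_le_cosh _
    have h4 : 0 ≤ Real.sinh t := Real.sinh_nonneg_iff.2 ht
    have h5 : 0 ≤ Real.sinh ((n:ℝ)*t) := Real.sinh_nonneg_iff.2 hnt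
    rw [h1]
    push_cast
    nlinarith

lemma harm_le (N : ℕ) :
    ∑ k ∈ Finset.range N, (1:ℝ)/(k+1) ≤ 1 + Real.log N := by
  induction N with
  | zero => simp
  | succ N ih =>
    rw [Finset.sum_range_succ]
    rcases Nat.eq_zero_or_pos N with h | h
    · subst h; simp
    · have hN : (0:ℝ) < N := by exact_mod_cast h
      have key : Real.log N + 1/((N:ℝ)+1) ≤ Real.log ((N:ℝ)+1) := by
        have h1 : Real.log ((N:ℝ)/((N:ℝ)+1)) ≤ (N:ℝ)/((N:ℝ)+1) - 1 :=
          Real.log_le_sub_one_of_pos (by positivity)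
        have h2 : Real.log ((N:ℝ)/((N:ℝ)+1)) = Real.log N - Real.log ((N:ℝ)+1) :=
          Real.log_div (ne_of_gt hN) (by positivity)
        have h3 : (N:ℝ)/((N:ℝ)+1) - 1 = -(1/((N:ℝ)+1)) := by field_simp; ring
        linarith
      push_cast
      linarith

lemma one_add_log_pow_le (m : ℕ) (hm : 1 ≤ m) {y : ℝ} (hy : 1 ≤ y) :
    (1 + Real.log y) ^ m ≤ ((m:ℝ)+1) ^ m * y := by
  have hy0 : (0:ℝ) < y := lt_of_lt_of_le one_pos hy
  have hm0 : ((m:ℝ)) ≠ 0 := by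
    have : (0:ℝ) < m := by exact_mod_cast hm
    exact ne_of_gt this
  set z := y ^ ((m:ℝ)⁻¹) with hz
  have hz1 : 1 ≤ z := Real.one_le_rpow hy (by positivity)
  have hz0 : 0 < z := lt_of_lt_of_le one_pos hz1
  have hlog : Real.log y = (m:ℝ) * Real.log z := by
    rw [hz, Real.log_rpow hy0]
    field_simp
  have hlz : Real.log z ≤ z - 1 := Real.log_le_sub_one_of_pos hz0
  have hmnn : (0:ℝ) ≤ m := Nat.cast_nonneg m
  have h1 : 1 + Real.log y ≤ ((m:ℝ)+1) * z := by
    rw [hlog]; nlinarith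
  have h2 : (0:ℝ) ≤ 1 + Real.log y := by
    have := Real.log_nonneg hy; linarith
  calc (1 + Real.log y)^m ≤ (((m:ℝ)+1)*z)^m := pow_le_pow_left₀ h2 h1 m
    _ = ((m:ℝ)+1)^m * z^m := mul_pow _ _ _
    _ = ((m:ℝ)+1)^m * y := by
        rw [hz, ← Real.rpow_natCast (y ^ ((m:ℝ)⁻¹)) m, ← Real.rpow_mul (le_of_lt hy0),
          inv_mul_cancel₀ hm0, Real.rpow_one]

theorem Hfun_moment_tendsto_zero
    (g : ℝ → ℝ) (hg_even : ∀ x, g (-x) = g x)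
    (hg_smooth : ContDiff ℝ (⊤ : ℕ∞) g) (hg_supp : HasCompactSupport g)
    (m : ℕ) (hm : 3 ≤ m) :
    ∀ ε : ℝ, 0 < ε → ∃ L₀ : ℝ, 0 < L₀ ∧ ∀ L : ℝ, L₀ < L → ∀ τ : ℝ, 0 ≤ τ →
      |∫ x in Set.Ioi (0 : ℝ),
          (Hfun g L τ x) ^ m * (2 * (Real.sinh (x / 2)) ^ 2 / x)| < ε := by
  obtain ⟨n, rfl⟩ : ∃ n, m = n + 3 := ⟨m - 3, by omega⟩
  intro ε hε
  -- bound on g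
  obtain ⟨C, hC⟩ := hg_supp.exists_bound_of_continuous hg_smooth.continuous
  have hC0 : 0 ≤ C := le_trans (norm_nonneg _) (hC 0)
  -- support radius
  obtain ⟨M₀, hM₀⟩ := hg_supp.isBounded.subset_closedBall (0:ℝ)
  set M : ℝ := max M₀ 1 with hM_def
  have hM1 : 1 ≤ M := le_max_right _ _
  have hM0 : 0 < M := lt_of_lt_of_le one_pos hM1
  have hgz : ∀ z : ℝ, M < |z| → g z = 0 := by
    intro z hz
    apply image_eq_zero_of_notMem_tsupport
    intro hmem
    have h1 := hM₀ hmem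
    rw [Metric.mem_closedBall, Real.dist_eq, sub_zero] at h1
    have h2 : |z| ≤ M := le_trans h1 (le_max_left _ _)
    linarith
  -- the constant
  set K : ℝ := 2^(2*n+6) * C^(n+3) * (((n+3:ℕ):ℝ)+1)^(n+3) with hK_def
  have hK0 : 0 ≤ K := by
    apply mul_nonneg (mul_nonneg (by positivity) (pow_nonneg hC0 _)) (by positivity)
  refine ⟨max 1 (K*M^2/ε), lt_of_lt_of_le one_pos (le_max_left _ _), ?_⟩
  intro L hL τ htau
  have hL1 : 1 < L := lt_of_le_of_lt (le_max_left _ _) hL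
  have hL0 : 0 < L := lt_trans one_pos hL1
  have hLK : K*M^2/ε < L := lt_of_le_of_lt (le_max_right _ _) hL
  set c : ℝ := K * M / L^(n+2) with hc_def
  have hc0 : 0 ≤ c := by
    apply div_nonneg (mul_nonneg hK0 (le_of_lt hM0)) (by positivity)
  -- pointwise bound
  have key : ∀ x ∈ Set.Ioi (0:ℝ),
      |Hfun g L τ x ^ (n+3) * (2 * (Real.sinh (x/2))^2 / x)|
        ≤ (Set.Ioc (0:ℝ) (M*L)).indicator (fun _ => c) x := by
    intro x hx
    have hx0 : 0 < x := hx
    have hs : 0 < Real.sinh (x/2) := Real.sinh_pos_iff.2 (by positivity)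
    by_cases hxM : x ≤ M * L
    · -- main case
      rw [Set.indicator_of_mem (show x ∈ Set.Ioc (0:ℝ) (M*L) from ⟨hx0, hxM⟩)]
      set s := Real.sinh (x/2) with hs_def
      have hs2 : x/2 ≤ s := Real.self_le_sinh_iff.2 (by positivity)
      set y : ℝ := M*L/x with hy_def
      have hy1 : 1 ≤ y := (one_le_div hx0).2 hxM
      have hy0 : (0:ℝ) ≤ y := le_trans zero_le_one hy1
      set LG : ℝ := 1 + Real.log y with hLG_def
      have hLG1 : 1 ≤ LG := by
        have := Real.log_nonneg hy1; simp only [hLG_def]; linarith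
      have hLG0 : 0 < LG := lt_of_lt_of_le one_pos hLG1
      clear_value s y LG
      set N : ℕ := Nat.floor y with hN_def
      have hN1 : 1 ≤ N := Nat.le_floor (by exact_mod_cast hy1)
      have hNy : (N:ℝ) ≤ y := Nat.floor_le hy0
      have hNpos : (0:ℝ) < N := by exact_mod_cast hN1
      -- vanishing of the tail
      have hterm0 : ∀ k ∉ Finset.range N,
          g (((k : ℝ) + 1) * x / L) * Real.cos (((k : ℝ) + 1) * x * τ) /
            Real.sinh (((k : ℝ) + 1) * x / 2) = 0 := by
        intro k hk
        have hkN : N ≤ k := by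
          by_contra h
          exact hk (Finset.mem_range.2 (not_le.1 h))
        have h1 : y < (k:ℝ) + 1 := by
          have := Nat.lt_floor_add_one y
          have h2 : (N:ℝ) ≤ (k:ℝ) := by exact_mod_cast hkN
          linarith
        have h2 : M * L < ((k:ℝ)+1) * x := by
          rw [hy_def] at h1
          calc M * L = (M*L/x) * x := by field_simp
            _ < ((k:ℝ)+1) * x := by
                apply mul_lt_mul_of_pos_right h1 hx0
        have h3 : M < ((k:ℝ)+1) * x / L := (lt_div_iff₀ hL0).2 h2
        have h4 : g (((k:ℝ)+1) * x / L) = 0 := by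
          apply hgz
          rwa [abs_of_pos (lt_trans hM0 h3)]
        rw [h4, zero_mul, zero_div]
      -- tsum bound
      have htsum : |∑' k : ℕ,
          g (((k : ℝ) + 1) * x / L) * Real.cos (((k : ℝ) + 1) * x * τ) /
            Real.sinh (((k : ℝ) + 1) * x / 2)| ≤ C * LG / s := by
        rw [tsum_eq_sum hterm0]
        have hper : ∀ k ∈ Finset.range N,
            |g (((k : ℝ) + 1) * x / L) * Real.cos (((k : ℝ) + 1) * x * τ) /
              Real.sinh (((k : ℝ) + 1) * x / 2)| ≤ C / (((k:ℝ)+1) * s) := by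
          intro k _
          have hks : (0:ℝ) < ((k:ℝ)+1) * s := by positivity
          have hsinh : ((k:ℝ)+1) * s ≤ Real.sinh (((k:ℝ)+1) * x / 2) := by
            have := sinh_superadd (k+1) (t := x/2) (by positivity)
            push_cast at this
            calc ((k:ℝ)+1) * s = ((k:ℝ)+1) * Real.sinh (x/2) := by rw [hs_def]
              _ ≤ Real.sinh (((k:ℝ)+1) * (x/2)) := this
              _ = Real.sinh (((k:ℝ)+1) * x / 2) := by ring_nf
          have habs : |Real.sinh (((k:ℝ)+1) * x / 2)| = Real.sinh (((k:ℝ)+1) * x / 2) :=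
            abs_of_pos (lt_of_lt_of_le hks hsinh)
          rw [abs_div, abs_mul, habs]
          apply div_le_div₀ hC0 ?_ hks hsinh
          · calc |g (((k:ℝ)+1)*x/L)| * |Real.cos (((k:ℝ)+1)*x*τ)|
                ≤ C * 1 := by
                  apply mul_le_mul ?_ (Real.abs_cos_le_one _) (abs_nonneg _) hC0
                  have := hC (((k:ℝ)+1)*x/L)
                  rwa [Real.norm_eq_abs] at this
              _ = C := mul_one C
        calc |∑ k ∈ Finset.range N,
              g (((k : ℝ) + 1) * x / L) * Real.cos (((k : ℝ) + 1) * x * τ) /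
                Real.sinh (((k : ℝ) + 1) * x / 2)|
            ≤ ∑ k ∈ Finset.range N,
              |g (((k : ℝ) + 1) * x / L) * Real.cos (((k : ℝ) + 1) * x * τ) /
                Real.sinh (((k : ℝ) + 1) * x / 2)| := Finset.abs_sum_le_sum_abs _ _
          _ ≤ ∑ k ∈ Finset.range N, C / (((k:ℝ)+1) * s) := Finset.sum_le_sum hper
          _ = (C/s) * ∑ k ∈ Finset.range N, (1:ℝ)/((k:ℝ)+1) := by
              rw [Finset.mul_sum]
              apply Finset.sum_congr rfl
              intro k _
              have hk : ((k:ℝ)+1) ≠ 0 := by positivity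
              field_simp
          _ ≤ (C/s) * (1 + Real.log N) := by
              apply mul_le_mul_of_nonneg_left (harm_le N) (by positivity)
          _ ≤ (C/s) * LG := by
              apply mul_le_mul_of_nonneg_left ?_ (by positivity)
              rw [hLG_def]
              have : Real.log N ≤ Real.log y := Real.log_le_log hNpos hNy
              linarith
          _ = C * LG / s := by ring
      -- bound on |Hfun|
      have hH : |Hfun g L τ x| ≤ 2*x*C*LG/(L*s) := by
        rw [Hfun, abs_mul, abs_of_pos (show (0:ℝ) < 2*x/L by positivity)]
        calc 2*x/L * |∑' k : ℕ,
              g (((k : ℝ) + 1) * x / L) * Real.cos (((k : ℝ) + 1) * x * τ) /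
                Real.sinh (((k : ℝ) + 1) * x / 2)|
            ≤ 2*x/L * (C * LG / s) := by
              apply mul_le_mul_of_nonneg_left htsum (by positivity)
          _ = 2*x*C*LG/(L*s) := by ring
      -- log power bound
      have hlogpow : LG^(n+3) ≤ (((n+3:ℕ):ℝ)+1)^(n+3) * y := by
        rw [hLG_def]
        exact one_add_log_pow_le (n+3) (by omega) hy1
      -- final numeric computation
      have e1 : |Hfun g L τ x ^ (n+3) * (2*s^2/x)| = |Hfun g L τ x|^(n+3) * (2*s^2/x) := by
        rw [abs_mul, abs_pow, abs_of_pos (show (0:ℝ) < 2*s^2/x by positivity)]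
      rw [e1]
      have hLs : (0:ℝ) < L * s := by positivity
      calc |Hfun g L τ x|^(n+3) * (2*s^2/x)
          ≤ (2*x*C*LG/(L*s))^(n+3) * (2*s^2/x) := by
            apply mul_le_mul_of_nonneg_right (pow_le_pow_left₀ (abs_nonneg _) hH _) (by positivity)
        _ = (2*x*C*LG)^(n+3) * (2*s^2) / ((L^(n+3) * (s^(n+1)*s^2)) * x) := by
            rw [div_pow]
            field_simp
            ring_nf
        _ ≤ (2*x*C*LG)^(n+3) * (2*s^2) / ((L^(n+3) * ((x/2)^(n+1)*s^2)) * x) := by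
            apply div_le_div_of_nonneg_left (by positivity) (by positivity)
            have h1 : (x/2)^(n+1) ≤ s^(n+1) := pow_le_pow_left₀ (by positivity) hs2 _
            have h2 : (0:ℝ) < s^2 := by positivity
            apply mul_le_mul_of_nonneg_right ?_ (le_of_lt hx0)
            apply mul_le_mul_of_nonneg_left ?_ (by positivity)
            exact mul_le_mul_of_nonneg_right h1 (le_of_lt h2)
        _ = 2^(2*n+6) * (C^(n+3) * LG^(n+3)) * x / L^(n+3) / 2 := by
            simp only [div_pow]
            field_simp
            ring
        _ ≤ 2^(2*n+6) * (C^(n+3) * ((((n+3:ℕ):ℝ)+1)^(n+3) * y)) * x / L^(n+3) / 2 := by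
            apply div_le_div_of_nonneg_right ?_ (by norm_num)
            apply div_le_div_of_nonneg_right ?_ (by positivity)
            apply mul_le_mul_of_nonneg_right ?_ (le_of_lt hx0)
            apply mul_le_mul_of_nonneg_left ?_ (by positivity)
            exact mul_le_mul_of_nonneg_left hlogpow (pow_nonneg hC0 _)
        _ = c / 2 := by
            rw [hc_def, hK_def, hy_def]
            field_simp
            ring
        _ ≤ c := by linarith
    · -- x > M*L : everything vanishes
      have hML : M*L < x := not_le.1 hxM
      have hz : Hfun g L τ x = 0 := by
        rw [Hfun]
        have hterm : ∀ k : ℕ,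
            g (((k : ℝ) + 1) * x / L) * Real.cos (((k : ℝ) + 1) * x * τ) /
              Real.sinh (((k : ℝ) + 1) * x / 2) = 0 := by
          intro k
          have h2 : M * L < ((k:ℝ)+1) * x := by
            calc M * L < x := hML
              _ = 1 * x := (one_mul x).symm
              _ ≤ ((k:ℝ)+1) * x := by
                  apply mul_le_mul_of_nonneg_right ?_ (le_of_lt hx0)
                  have : (0:ℝ) ≤ (k:ℝ) := Nat.cast_nonneg k
                  linarith
          have h3 : M < ((k:ℝ)+1) * x / L := (lt_div_iff₀ hL0).2 h2
          rw [hgz _ (by rwa [abs_of_pos (lt_trans hM0 h3)]), zero_mul, zero_div]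
        rw [tsum_congr hterm, tsum_zero, mul_zero]
      rw [hz]
      rw [Set.indicator_of_notMem (by
        intro hmem
        exact absurd hmem.2 (not_le.2 hML))]
      simp [zero_pow (show n+3 ≠ 0 by omega)]
  -- integrability of the dominating function
  have hind_int : Integrable ((Set.Ioc (0:ℝ) (M*L)).indicator (fun _ => c))
      (volume.restrict (Set.Ioi 0)) := by
    rw [integrable_indicator_iff measurableSet_Ioc]
    refine integrableOn_const (ne_of_lt ?_)
    calc (volume.restrict (Set.Ioi (0:ℝ))) (Set.Ioc 0 (M*L))
        ≤ volume (Set.Ioc (0:ℝ) (M*L)) := Measure.restrict_apply_le _ _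
      _ < ⊤ := measure_Ioc_lt_top
  -- value of the integral of the dominating function
  have hind_val : ∫ x in Set.Ioi (0:ℝ), (Set.Ioc (0:ℝ) (M*L)).indicator (fun _ => c) x
      = (M*L) * c := by
    rw [integral_indicator measurableSet_Ioc, setIntegral_const, measureReal_def,
      Measure.restrict_apply measurableSet_Ioc,
      Set.inter_eq_self_of_subset_left Set.Ioc_subset_Ioi_self,
      Real.volume_Ioc, sub_zero, ENNReal.toReal_ofReal (by positivity), smul_eq_mul]
  -- conclusion
  have hae : ∀ᵐ x ∂(volume.restrict (Set.Ioi (0:ℝ))),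
      ‖Hfun g L τ x ^ (n+3) * (2 * (Real.sinh (x/2))^2 / x)‖
        ≤ (Set.Ioc (0:ℝ) (M*L)).indicator (fun _ => c) x := by
    refine (ae_restrict_iff' measurableSet_Ioi).2 (Filter.Eventually.of_forall ?_)
    intro x hx
    rw [Real.norm_eq_abs]
    exact key x hx
  have hmain := norm_integral_le_of_norm_le hind_int hae
  rw [Real.norm_eq_abs] at hmain
  calc |∫ x in Set.Ioi (0:ℝ), Hfun g L τ x ^ (n+3) * (2 * (Real.sinh (x/2))^2 / x)|
      ≤ ∫ x in Set.Ioi (0:ℝ), (Set.Ioc (0:ℝ) (M*L)).indicator (fun _ => c) x := hmain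
    _ = (M*L) * c := hind_val
    _ = K * M^2 / L^(n+1) := by
        rw [hc_def]
        field_simp
        ring
    _ ≤ K * M^2 / L := by
        apply div_le_div_of_nonneg_left (mul_nonneg hK0 (by positivity)) hL0
        exact le_self_pow₀ (le_of_lt hL1) (Nat.succ_ne_zero n)
    _ < ε := by
        rw [div_lt_iff₀ hL0]
        have h1 : K*M^2/ε * ε < L * ε := mul_lt_mul_of_pos_right hLK hε
        rw [div_mul_cancel₀ _ (ne_of_gt hε)] at h1
        linarith
end
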